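/- Let (X,d) be a metric space. Then X is ultrametric if and only if for every compact set W ⊆ X and every ε > 0 the equality N_ε(W) = M_ε(W) holds. -/

import Mathlib

/-!
In an ultrametric space two points of an `ε`-distinguishable set cannot share a point of an
`ε`-net, since by the strong triangle inequality they would be `ε`-close; so every packing
injects into every net. A maximal `ε`-distinguishable subset of `W` (Zorn) is itself an
`ε`-net, and the two numbers coincide. Conversely, if `max (d x y) (d y z) = ε < d x z`,
then `{x, y, z}` is covered by the single point `y`, while `{x, z}` is an `ε`-packing of it.
-/

open Cardinal Set

universe u

/-- `C` is an `ε`-net for `W` (w.r.t. the distance function `d`): every point of `W`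
is within distance `ε` of some point of `C`. -/
def IsNet {α : Type u} (d : α → α → ℝ) (ε : ℝ) (W C : Set α) : Prop :=
  ∀ w ∈ W, ∃ c ∈ C, d w c ≤ ε

/-- `A` is `ε`-distinguishable: distinct points of `A` are at distance `> ε`. -/
def IsDistinguishable {α : Type u} (d : α → α → ℝ) (ε : ℝ) (A : Set α) : Prop :=
  ∀ x ∈ A, ∀ y ∈ A, x ≠ y → ε < d x y

/-- `N̂ᴬ_ε(W)`: the smallest cardinality of a set `C ⊆ A` which is an `ε`-net for `W`. -/
noncomputable def coveringNumberIn {α : Type u} (d : α → α → ℝ) (ε : ℝ) (A W : Set α) :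
    Cardinal.{u} :=
  sInf {κ | ∃ C : Set α, C ⊆ A ∧ IsNet d ε W C ∧ #C = κ}

/-- `M*_ε(W)`: the smallest cardinal `≥ card A` for every `ε`-distinguishable `A ⊆ W`. -/
noncomputable def packingNumberSup {α : Type u} (d : α → α → ℝ) (ε : ℝ) (W : Set α) :
    Cardinal.{u} :=
  sSup {κ | ∃ A : Set α, A ⊆ W ∧ IsDistinguishable d ε A ∧ #A = κ}

/-- `M̂_ε(W)`: the smallest cardinality of a maximal `ε`-distinguishable subset of `W`. -/
noncomputable def maximalPackingInf {α : Type u} (d : α → α → ℝ) (ε : ℝ) (W : Set α) :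
    Cardinal.{u} :=
  sInf {κ | ∃ A : Set α, A ⊆ W ∧ IsDistinguishable d ε A ∧
    (∀ B : Set α, B ⊆ W → IsDistinguishable d ε B → A ⊆ B → A = B) ∧ #A = κ}

section General

variable {α : Type u} {d : α → α → ℝ} {ε : ℝ} {A W C : Set α}

lemma coveringNumberIn_le_mk (hCA : C ⊆ A) (hC : IsNet d ε W C) :
    coveringNumberIn d ε A W ≤ #C :=
  csInf_le (OrderBot.bddBelow _) ⟨C, hCA, hC, rfl⟩

lemma mk_le_packingNumberSup (hAW : A ⊆ W) (hA : IsDistinguishable d ε A) :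
    #A ≤ packingNumberSup d ε W :=
  le_csSup ⟨#α, by rintro κ ⟨B, -, -, rfl⟩; exact mk_set_le B⟩ ⟨A, hAW, hA, rfl⟩

lemma exists_maximal_isDistinguishable (d : α → α → ℝ) (ε : ℝ) (W : Set α) :
    ∃ A, Maximal (fun A ↦ A ⊆ W ∧ IsDistinguishable d ε A) A := by
  refine zorn_subset _ fun c hc hchain ↦ ⟨⋃₀ c, ⟨?_, ?_⟩, fun _ ↦ subset_sUnion_of_mem⟩
  · exact sUnion_subset fun s hs ↦ (hc hs).1
  · exact hchain.pairwise_sUnion.2 fun s hs ↦ (hc hs).2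

end General

section Metric

variable {X : Type u} [PseudoMetricSpace X] {ε : ℝ} {A W C : Set X}

lemma IsNet.of_maximal_isDistinguishable (hε : 0 ≤ ε)
    (hA : Maximal (fun A ↦ A ⊆ W ∧ IsDistinguishable dist ε A) A) : IsNet dist ε W A := by
  intro w hw
  by_contra! hfar
  have hwA : w ∈ A := hA.2 (y := insert w A)
    ⟨insert_subset hw hA.1.1, Set.Pairwise.insert hA.1.2 fun a ha _ ↦
      ⟨hfar a ha, dist_comm w a ▸ hfar a ha⟩⟩ (subset_insert w A)
    (mem_insert w A)
  exact (hfar w hwA).not_ge (by simpa using hε)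

lemma coveringNumberIn_self_le_packingNumberSup (hε : 0 ≤ ε) :
    coveringNumberIn dist ε W W ≤ packingNumberSup dist ε W := by
  obtain ⟨A, hA⟩ := exists_maximal_isDistinguishable dist ε W
  exact (coveringNumberIn_le_mk hA.1.1 (.of_maximal_isDistinguishable hε hA)).trans
    (mk_le_packingNumberSup hA.1.1 hA.1.2)

lemma IsDistinguishable.mk_le_of_isNet [IsUltrametricDist X] (hAW : A ⊆ W)
    (hA : IsDistinguishable dist ε A) (hC : IsNet dist ε W C) : #A ≤ #C := by
  choose f hfC hf using fun a : A ↦ hC a (hAW a.2)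
  refine mk_le_of_injective (f := fun a ↦ (⟨f a, hfC a⟩ : C)) fun a b hab ↦ ?_
  by_contra hne
  have hfab : f a = f b := Subtype.mk.inj hab
  have hclose : dist (a : X) b ≤ ε :=
    (IsUltrametricDist.dist_triangle_max _ (f a) _).trans <|
      max_le (hf a) (by rw [hfab, dist_comm]; exact hf b)
  exact (hA a a.2 b b.2 (Subtype.coe_injective.ne hne)).not_ge hclose

lemma packingNumberSup_le_coveringNumberIn_self [IsUltrametricDist X] (hε : 0 ≤ ε) :
    packingNumberSup dist ε W ≤ coveringNumberIn dist ε W W := by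
  have hW : IsNet dist ε W W := fun w hw ↦ ⟨w, hw, by simpa using hε⟩
  refine csSup_le ⟨0, ∅, empty_subset W, pairwise_empty _, by simp⟩ ?_
  rintro κ ⟨A, hAW, hA, rfl⟩
  exact le_csInf ⟨#W, W, subset_rfl, hW, rfl⟩ fun μ ⟨C, _, hC, hμ⟩ ↦
    hμ ▸ hA.mk_le_of_isNet hAW hC

lemma coveringNumberIn_self_eq_packingNumberSup [IsUltrametricDist X] (hε : 0 ≤ ε) :
    coveringNumberIn dist ε W W = packingNumberSup dist ε W :=
  (coveringNumberIn_self_le_packingNumberSup hε).antisymm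
    (packingNumberSup_le_coveringNumberIn_self hε)

lemma coveringNumberIn_triple_lt_packingNumberSup {x y z : X} (hxy : dist x y ≤ ε)
    (hyz : dist y z ≤ ε) (hxz : ε < dist x z) :
    coveringNumberIn dist ε {x, y, z} {x, y, z} < packingNumberSup dist ε {x, y, z} := by
  have hε : 0 ≤ ε := dist_nonneg.trans hxy
  have hne : x ≠ z := fun h ↦ by simp [h] at hxz; linarith
  have hcov : IsNet dist ε {x, y, z} {y} := by
    rintro w (rfl | rfl | rfl)
    · exact ⟨_, rfl, hxy⟩
    · exact ⟨_, rfl, by simpa using hε⟩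
    · exact ⟨_, rfl, by rwa [dist_comm]⟩
  have hpack : IsDistinguishable dist ε {x, z} :=
    Set.Pairwise.insert (pairwise_singleton _ _) fun _ hb _ ↦ by
      rw [mem_singleton_iff.1 hb, dist_comm z]
      exact ⟨hxz, hxz⟩
  calc coveringNumberIn dist ε {x, y, z} {x, y, z} ≤ #({y} : Set X) :=
        coveringNumberIn_le_mk (by simp) hcov
    _ < #({x, z} : Set X) := by
        rw [mk_singleton, mk_insert (by simpa using hne), mk_singleton]
        norm_num
    _ ≤ packingNumberSup dist ε {x, y, z} :=
        mk_le_packingNumberSup (by simp [insert_subset_iff]) hpack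

end Metric

/-- Theorem 1.6, (i) ⇔ (iii): a metric space `X` is ultrametric if and only if for every
compact `W ⊆ X` and every `ε > 0` the covering number equals the packing number. -/
theorem ultrametric_iff_compact_covering_eq_packing {X : Type u} [MetricSpace X] :
    (∀ x y z : X, dist x z ≤ max (dist x y) (dist y z)) ↔
      ∀ W : Set X, IsCompact W → ∀ ε : ℝ, 0 < ε →
        coveringNumberIn dist ε W W = packingNumberSup dist ε W := by
  constructor
  · intro hultra W _ ε hε
    have : IsUltrametricDist X := ⟨hultra⟩
    exact coveringNumberIn_self_eq_packingNumberSup hε.le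
  · intro h x y z
    by_contra! hxz
    have hε : 0 < max (dist x y) (dist y z) := by
      linarith [dist_triangle x y z, le_max_left (dist x y) (dist y z),
        le_max_right (dist x y) (dist y z)]
    exact (coveringNumberIn_triple_lt_packingNumberSup (le_max_left _ _) (le_max_right _ _)
      hxz).ne (h _ (toFinite _).isCompact _ hε)
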